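/- Let g : ℕ → ℝ be a nonnegative function with lim_{n→∞} g(n) = 0, and set p(n) := n^{−g(n)}. Then for every integer k ≥ 2 there exists N ∈ ℕ such that for all n ≥ N, the Erdős–Rényi random graph G(n,p(n)) contains a clique of size k with probability at least 1 − exp(−n^{1/2}). -/

import Mathlib

open MeasureTheory
open scoped Classical

noncomputable def bernoulliMeasure (p : ℝ) : Measure Bool :=
  (PMF.bernoulli (min (Real.toNNReal p) 1) (min_le_right _ _)).toMeasure

noncomputable def erdosRenyi (n : ℕ) (p : ℝ) : Measure (Sym2 (Fin n) → Bool) :=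
  Measure.pi fun _ => bernoulliMeasure p

def IsCompleteOn {n : ℕ} (ω : Sym2 (Fin n) → Bool) (S : Finset (Fin n)) : Prop :=
  ∀ u ∈ S, ∀ v ∈ S, u ≠ v → ω s(u, v) = true

noncomputable def cliqueCount (n s : ℕ) (ω : Sym2 (Fin n) → Bool) : ℕ :=
  (Finset.univ.filter fun S : Finset (Fin n) => S.card = s ∧ IsCompleteOn ω S).card

/-!
Split the vertices into `⌊n/k⌋` disjoint blocks of `k` consecutive vertices. The events
"block `i` is a clique" depend on disjoint sets of edges, hence are independent, and each has
probability `p ^ (k choose 2) ≥ n ^ (-1/4)` as soon as `g n * (k choose 2) ≤ 1/4`. So no block is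
a clique with probability at most `(1 - n ^ (-1/4)) ^ ⌊n/k⌋ ≤ exp (-⌊n/k⌋ n ^ (-1/4))`, which is
at most `exp (-√n)` once `n ≥ (2k) ^ 4`.
-/

open Finset Function
open scoped ENNReal

namespace ProbabilityTheory

theorem iIndepSet_pi_finset {ι J : Type*} [Fintype ι] {α : ι → Type*}
    [∀ i, MeasurableSpace (α i)] (μ : ∀ i, Measure (α i)) [∀ i, IsProbabilityMeasure (μ i)]
    {t : ∀ i, Set (α i)} (ht : ∀ i, MeasurableSet (t i)) {E : J → Finset ι}
    (hE : Pairwise (Disjoint on E)) :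
    iIndepSet (fun j => (E j : Set ι).pi t) (Measure.pi μ) := by
  refine (iIndepSet_iff_meas_biInter fun j => .pi (E j).countable_toSet fun i _ => ht i).2
    fun s => ?_
  have hunion : ⋂ j ∈ s, (E j : Set ι).pi t = (↑(s.biUnion E) : Set ι).pi t := by
    ext ω
    simp only [Set.mem_iInter, Set.mem_pi, mem_coe, coe_biUnion, Set.mem_iUnion, exists_prop]
    exact ⟨fun h i ⟨j, hj, hi⟩ => h j hj i hi, fun h j hj i hi => h i ⟨j, hj, hi⟩⟩
  simp_rw [hunion, Measure.pi_pi_finset]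
  exact prod_biUnion (hE.set_pairwise _)

theorem iIndepSet.one_sub_pow_le_measure_iUnion {Ω J : Type*} [Fintype J] [MeasurableSpace Ω]
    {μ : Measure Ω} {A : J → Set Ω} (h : iIndepSet A μ) (hA : ∀ j, MeasurableSet (A j))
    {r : ℝ≥0∞} (hr : ∀ j, r ≤ μ (A j)) :
    1 - (1 - r) ^ Fintype.card J ≤ μ (⋃ j, A j) := by
  have := h.isProbabilityMeasure
  have hcompl : μ (⋂ j, (A j)ᶜ) = ∏ j, (1 - μ (A j)) := by
    rw [((iIndepSet_iff_iIndep _ _).1 h).meas_iInter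
      fun j => (MeasurableSpace.measurableSet_generateFrom (Set.mem_singleton _)).compl]
    exact prod_congr rfl fun j _ => prob_compl_eq_one_sub (hA j)
  have hprod : ∏ j, (1 - μ (A j)) ≤ (1 - r) ^ Fintype.card J :=
    prod_le_pow_card _ _ _ fun j _ => tsub_le_tsub_left (hr j) 1
  rw [← compl_compl (⋃ j, A j), Set.compl_iUnion,
    prob_compl_eq_one_sub (.iInter fun j => (hA j).compl), hcompl]
  exact tsub_le_tsub_left hprod 1

end ProbabilityTheory

theorem disjoint_image_offDiag {α : Type*} [DecidableEq α] {S T : Finset α}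
    (h : Disjoint S T) :
    Disjoint (S.offDiag.image Sym2.mk.uncurry) (T.offDiag.image Sym2.mk.uncurry) := by
  simp only [disjoint_left, mem_image, mem_offDiag, Prod.exists, uncurry_apply_pair,
    not_exists, not_and]
  rintro _ ⟨a, b, ⟨ha, -, -⟩, rfl⟩ c d ⟨hc, hd, -⟩ hcd
  rcases Sym2.eq_iff.1 hcd with ⟨rfl, -⟩ | ⟨-, rfl⟩
  exacts [disjoint_left.1 h ha hc, disjoint_left.1 h ha hd]

theorem exists_pairwise_disjoint_card_eq (n k : ℕ) :
    ∃ S : Fin (n / k) → Finset (Fin n), (∀ i, #(S i) = k) ∧ Pairwise (Disjoint on S) := by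
  have hlt (i : Fin (n / k)) : ∀ v ∈ Ico (i * k) (i * k + k), v < n := fun v hv =>
    calc v < (i + 1) * k := by rw [add_one_mul]; exact (mem_Ico.1 hv).2
      _ ≤ n / k * k := Nat.mul_le_mul_right k i.2
      _ ≤ n := Nat.div_mul_le_self n k
  refine ⟨fun i => (Ico (i * k) (i * k + k)).attachFin (hlt i), fun i => by simp, ?_⟩
  intro i j hij
  simp only [onFun, disjoint_left, mem_attachFin, mem_Ico]
  intro v hi hj
  have hdiv (l : Fin (n / k)) (h : (l : ℕ) * k ≤ v ∧ v < (l : ℕ) * k + k) : (v : ℕ) / k = l :=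
    Nat.div_eq_of_lt_le h.1 (by rw [add_one_mul]; exact h.2)
  exact hij (Fin.ext <| (hdiv i hi).symm.trans (hdiv j hj))

instance (p : ℝ) : IsProbabilityMeasure (bernoulliMeasure p) :=
  PMF.toMeasure.isProbabilityMeasure _

theorem bernoulliMeasure_singleton_true (p : ℝ) :
    bernoulliMeasure p {true} = ENNReal.ofReal (min p 1) := by
  rw [bernoulliMeasure, PMF.toMeasure_apply_singleton _ _ (measurableSet_singleton _),
    ENNReal.ofReal_min, ENNReal.ofReal_one]
  exact ENNReal.coe_min _ _

theorem isCompleteOn_iff_mem_pi {n : ℕ} (ω : Sym2 (Fin n) → Bool) (S : Finset (Fin n)) :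
    IsCompleteOn ω S ↔
      ω ∈ (↑(S.offDiag.image Sym2.mk.uncurry) : Set (Sym2 (Fin n))).pi fun _ => {true} := by
  simp only [IsCompleteOn, Set.mem_pi, coe_image, Set.forall_mem_image, mem_coe, mem_offDiag,
    Set.mem_singleton_iff, Prod.forall, uncurry_apply_pair, and_imp]
  exact ⟨fun h u v hu hv => h u hu v hv, fun h u hu v hv => h u v hu hv⟩

theorem erdosRenyi_isCompleteOn (n : ℕ) (p : ℝ) (S : Finset (Fin n)) :
    erdosRenyi n p {ω | IsCompleteOn ω S} = bernoulliMeasure p {true} ^ (#S).choose 2 := by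
  simp only [isCompleteOn_iff_mem_pi, Set.ofPred_mem_eq, erdosRenyi, Measure.pi_pi_finset,
    prod_const, Sym2.card_image_offDiag]

theorem one_sub_pow_le_erdosRenyi_exists_clique (n k : ℕ) (p : ℝ) :
    1 - (1 - bernoulliMeasure p {true} ^ k.choose 2) ^ (n / k) ≤
      erdosRenyi n p {ω | ∃ S : Finset (Fin n), #S = k ∧ IsCompleteOn ω S} := by
  obtain ⟨S, hcard, hdisj⟩ := exists_pairwise_disjoint_card_eq n k
  have hindep : ProbabilityTheory.iIndepSet (fun i => {ω | IsCompleteOn ω (S i)})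
      (erdosRenyi n p) := by
    simp only [isCompleteOn_iff_mem_pi, Set.ofPred_mem_eq]
    exact ProbabilityTheory.iIndepSet_pi_finset _ (fun _ => measurableSet_singleton true)
      fun i j hij => disjoint_image_offDiag (hdisj hij)
  calc 1 - (1 - bernoulliMeasure p {true} ^ k.choose 2) ^ (n / k)
      ≤ erdosRenyi n p (⋃ i, {ω | IsCompleteOn ω (S i)}) := by
        simpa using hindep.one_sub_pow_le_measure_iUnion (fun _ => .of_discrete)
          fun i => (by rw [erdosRenyi_isCompleteOn, hcard])
    _ ≤ _ := measure_mono fun ω hω => by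
        obtain ⟨i, hi⟩ := Set.mem_iUnion.1 hω
        exact ⟨S i, hcard i, hi⟩

theorem ENNReal.ofReal_one_sub_exp_neg_le_one_sub_pow {q x : ℝ} {m : ℕ} (hq0 : 0 ≤ q)
    (hq1 : q ≤ 1) (hx : x ≤ m * q) :
    ENNReal.ofReal (1 - Real.exp (-x)) ≤ 1 - (1 - ENNReal.ofReal q) ^ m := by
  have hpow : (1 - q) ^ m ≤ Real.exp (-x) :=
    calc (1 - q) ^ m ≤ Real.exp (-q) ^ m :=
          pow_le_pow_left₀ (sub_nonneg.2 hq1) (Real.one_sub_le_exp_neg q) m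
      _ = Real.exp (-(m * q)) := by rw [← Real.exp_nat_mul]; ring_nf
      _ ≤ Real.exp (-x) := Real.exp_le_exp.2 (neg_le_neg hx)
  rw [ENNReal.ofReal_sub _ (Real.exp_nonneg _), ENNReal.ofReal_one, ← ENNReal.ofReal_one,
    ← ENNReal.ofReal_sub _ hq0, ← ENNReal.ofReal_pow (sub_nonneg.2 hq1)]
  exact tsub_le_tsub_left (ENNReal.ofReal_le_ofReal hpow) _

theorem sqrt_le_div_mul_rpow_neg_quarter {n k : ℕ} (hk : 0 < k) (hn : (2 * k) ^ 4 ≤ n) :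
    √(n : ℝ) ≤ (n / k : ℕ) * (n : ℝ) ^ (-(1 / 4 : ℝ)) := by
  set t := (n : ℝ) ^ (1 / 4 : ℝ) with ht
  have htn : t ^ 4 = n := by
    rw [ht, ← Real.rpow_natCast, ← Real.rpow_mul n.cast_nonneg]; norm_num
  have ht0 : 0 < t := by
    have : 0 < n := lt_of_lt_of_le (by positivity) hn
    positivity
  have hkt : 2 * (k : ℝ) ≤ t :=
    le_of_pow_le_pow_left₀ four_ne_zero ht0.le (by rw [htn]; exact_mod_cast hn)
  have hdiv : (n : ℝ) ≤ 2 * k * (n / k : ℕ) := by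
    have h1 := Nat.div_add_mod n k
    have h2 := Nat.mod_lt n hk
    have h3 : 2 * k ≤ n := le_trans (Nat.le_self_pow four_ne_zero _) hn
    have : n ≤ 2 * k * (n / k) := by nlinarith
    exact_mod_cast this
  have hcube : t ^ 3 ≤ (n / k : ℕ) := by
    refine le_of_mul_le_mul_left ?_ (by positivity : (0 : ℝ) < 2 * k)
    nlinarith [pow_pos ht0 3]
  calc √(n : ℝ) = t ^ 3 * t⁻¹ := by
        rw [← htn, show t ^ 4 = (t ^ 2) ^ 2 by ring, Real.sqrt_sq (by positivity)]
        field_simp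
    _ ≤ (n / k : ℕ) * (n : ℝ) ^ (-(1 / 4 : ℝ)) := by
        rw [Real.rpow_neg n.cast_nonneg, ← ht]
        gcongr

theorem ofReal_rpow_neg_le_bernoulliMeasure_pow {x g a : ℝ} {C : ℕ} (hx : 1 ≤ x)
    (ha : 0 ≤ a) (hg : g * C ≤ a) :
    ENNReal.ofReal (x ^ (-a)) ≤ bernoulliMeasure (x ^ (-g)) {true} ^ C := by
  rw [bernoulliMeasure_singleton_true, ← ENNReal.ofReal_pow (by positivity)]
  refine ENNReal.ofReal_le_ofReal ?_
  rcases min_cases (x ^ (-g)) 1 with ⟨hmin, -⟩ | ⟨hmin, -⟩ <;> rw [hmin]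
  · rw [← Real.rpow_natCast, ← Real.rpow_mul (by positivity)]
    exact Real.rpow_le_rpow_of_exponent_le hx (by linarith)
  · rw [one_pow]
    exact Real.rpow_le_one_of_one_le_of_nonpos hx (neg_nonpos.2 ha)

theorem erdosRenyi_clique_whp_of_tendsto_zero_general
    (g : ℕ → ℝ)
    (hlim : Filter.Tendsto g Filter.atTop (nhds 0))
    (k : ℕ) (hk : 2 ≤ k) :
    ∃ N : ℕ, ∀ n ≥ N,
      ENNReal.ofReal (1 - Real.exp (-Real.sqrt n)) ≤
        erdosRenyi n ((n : ℝ) ^ (-(g n)))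
          {ω : Sym2 (Fin n) → Bool |
            ∃ S : Finset (Fin n), S.card = k ∧ IsCompleteOn ω S} := by
  have hsmall : ∀ᶠ n in Filter.atTop, g n * k.choose 2 ≤ 1 / 4 :=
    (hlim.mul_const _).eventually_le_const (by norm_num : (0 : ℝ) * k.choose 2 < 1 / 4)
  obtain ⟨N, hN⟩ := (hsmall.and (Filter.eventually_ge_atTop ((2 * k) ^ 4))).exists_forall_of_atTop
  refine ⟨N, fun n hn => ?_⟩
  obtain ⟨hgn, hn4⟩ := hN n hn
  have hn1 : (1 : ℝ) ≤ n := by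
    exact_mod_cast le_trans (Nat.one_le_pow _ _ (by omega)) hn4
  calc ENNReal.ofReal (1 - Real.exp (-√(n : ℝ)))
      ≤ 1 - (1 - ENNReal.ofReal ((n : ℝ) ^ (-(1 / 4 : ℝ)))) ^ (n / k) :=
        ENNReal.ofReal_one_sub_exp_neg_le_one_sub_pow (by positivity)
          (Real.rpow_le_one_of_one_le_of_nonpos hn1 (by norm_num))
          (sqrt_le_div_mul_rpow_neg_quarter (by omega) hn4)
    _ ≤ 1 - (1 - bernoulliMeasure ((n : ℝ) ^ (-(g n))) {true} ^ k.choose 2) ^ (n / k) := by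
        gcongr
        exact ofReal_rpow_neg_le_bernoulliMeasure_pow hn1 (by norm_num) hgn
    _ ≤ _ := one_sub_pow_le_erdosRenyi_exists_clique n k _

/-- If `g ≥ 0` tends to `0` and `p(n) = n^{−g(n)}`, then for every `k ≥ 2`
there is `N` such that for all `n ≥ N`, the random graph `G(n, p(n))` contains a clique of
size `k` with probability at least `1 − exp(−n^{1/2})`. -/
theorem erdosRenyi_clique_whp_of_tendsto_zero
    (g : ℕ → ℝ) (hg : ∀ n, 0 ≤ g n)
    (hlim : Filter.Tendsto g Filter.atTop (nhds 0))
    (k : ℕ) (hk : 2 ≤ k) :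
    ∃ N : ℕ, ∀ n ≥ N,
      ENNReal.ofReal (1 - Real.exp (-Real.sqrt n)) ≤
        erdosRenyi n ((n : ℝ) ^ (-(g n)))
          {ω : Sym2 (Fin n) → Bool |
            ∃ S : Finset (Fin n), S.card = k ∧ IsCompleteOn ω S} :=
  erdosRenyi_clique_whp_of_tendsto_zero_general g hlim k hk
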